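/- Let K₁ and K₂ be two proper invariant cones of an irreducible finite family of d×d real matrices. Then exactly one of the two sets K₁ ∩ K₂ and K₁ ∩ (−K₂) is a proper cone, and the other equals {0}. -/

import Mathlib

open Matrix Set

def IsProperCone {d : ℕ} (K : Set (Fin d → ℝ)) : Prop :=
  IsClosed K ∧ Convex ℝ K ∧ (∀ x ∈ K, ∀ t : ℝ, 0 ≤ t → t • x ∈ K) ∧
    K ∩ (-K) = {0} ∧ (interior K).Nonempty

def IsInvariantCone {d m : ℕ} (𝒜 : Fin m → Matrix (Fin d) (Fin d) ℝ)
    (K : Set (Fin d → ℝ)) : Prop :=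
  IsProperCone K ∧ ∀ i, ∀ x ∈ K, (𝒜 i).mulVec x ∈ K

def IsIrreducibleFamily {d m : ℕ} (𝒜 : Fin m → Matrix (Fin d) (Fin d) ℝ) : Prop :=
  ∀ V : Submodule ℝ (Fin d → ℝ), (∀ i, ∀ x ∈ V, (𝒜 i).mulVec x ∈ V) → V = ⊥ ∨ V = ⊤

/-!
Nonnegative combinations of products of the matrices preserve both cones. Irreducibility makes
the orbit cone of every nonzero vector full-dimensional, and compactness of the unit sphere then
yields one such operator `T` mapping `Kᵢ \ {0}` into the interior of `Kᵢ` for `i = 1, 2`.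
Maximizing the Collatz–Wielandt ratio gives a Perron eigenvector of `T` in the interior of each
cone; comparing the growth of `Tⁿ` forces the two Perron eigenvalues to agree, and strict
positivity makes that eigenspace a line. The two eigenvectors are therefore proportional, which
puts a nonzero vector in `K₁ ∩ K₂` or in `K₁ ∩ -K₂`, and such an intersection is an invariant
cone, full-dimensional by irreducibility. The two intersections cannot both be nontrivial: the
same argument applied to them yields a nonzero vector of `K₂ ∩ -K₂` or of `K₁ ∩ -K₁`.
-/

open Filter Topology

section Cones

variable {E : Type*} [NormedAddCommGroup E] [NormedSpace ℝ E]

lemma exists_pos_add_smul_mem_and_sub_smul_mem {K : Set E} {x : E} (hx : x ∈ interior K)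
    (w : E) : ∃ δ : ℝ, 0 < δ ∧ x + δ • w ∈ K ∧ x - δ • w ∈ K := by
  have hcont : Continuous fun t : ℝ => x + t • w := by fun_prop
  have hnhds : ∀ᶠ t in 𝓝 (0 : ℝ), x + t • w ∈ K :=
    hcont.continuousAt.preimage_mem_nhds (by simpa using mem_interior_iff_mem_nhds.1 hx)
  obtain ⟨ε, hε, hball⟩ := Metric.eventually_nhds_iff.1 hnhds
  refine ⟨ε / 2, half_pos hε, hball ?_, ?_⟩
  · rw [Real.dist_0_eq_abs, abs_of_pos (half_pos hε)]; linarith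
  · rw [sub_eq_add_neg, ← neg_smul]
    exact hball (by rw [Real.dist_0_eq_abs, abs_neg, abs_of_pos (half_pos hε)]; linarith)

namespace ProperCone

variable (K : ProperCone ℝ E) {T : Module.End ℝ E} {x y v w : E} {ρ ρ' : ℝ}

open Pointwise in
lemma smul_mem_interior (hx : x ∈ interior K) {t : ℝ} (ht : 0 < t) : t • x ∈ interior K := by
  refine mem_interior.2 ⟨t • interior K, ?_, isOpen_interior.smul₀ ht.ne', smul_mem_smul_set hx⟩
  rintro _ ⟨z, hz, rfl⟩
  exact K.smul_mem (interior_subset hz) ht.le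

lemma add_mem_interior (hx : x ∈ interior K) (hy : y ∈ K) : x + y ∈ interior K := by
  refine mem_interior.2 ⟨(· + y) '' interior K, ?_, (Homeomorph.addRight y).isOpenMap _
    isOpen_interior, mem_image_of_mem _ hx⟩
  rintro _ ⟨z, hz, rfl⟩
  exact add_mem (interior_subset hz) hy

def IsStrictlyPositive (T : Module.End ℝ E) : Prop :=
  ∀ x ∈ K, x ≠ 0 → T x ∈ interior K

variable {K} in
lemma IsStrictlyPositive.mapsTo (hT : K.IsStrictlyPositive T) : MapsTo T K K := fun x hx => by
  rcases eq_or_ne x 0 with rfl | hx0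
  · simp [zero_mem K]
  · exact interior_subset (hT x hx hx0)

variable {K} in
lemma IsStrictlyPositive.add_of_mapsTo {A B : Module.End ℝ E} (hA : K.IsStrictlyPositive A)
    (hB : MapsTo B K K) : K.IsStrictlyPositive (A + B) :=
  fun x hx hx0 => K.add_mem_interior (hA x hx hx0) (hB hx)

lemma zero_notMem_interior [Nontrivial E] (hK : (K : ConvexCone ℝ E).Salient) :
    (0 : E) ∉ interior K := by
  intro h0
  obtain ⟨w, hw⟩ := exists_ne (0 : E)
  obtain ⟨δ, hδ, hplus, hminus⟩ := exists_pos_add_smul_mem_and_sub_smul_mem h0 w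
  rw [zero_add] at hplus
  rw [zero_sub] at hminus
  exact hK _ hplus (smul_ne_zero hδ.ne' hw) hminus

lemma mem_of_frequently_add_smul_mem (h : ∃ᶠ t : ℝ in atTop, v + t • w ∈ K) : w ∈ K := by
  have hmem : ∃ᶠ t in atTop, t⁻¹ • (v + t • w) ∈ K :=
    (h.and_eventually (eventually_gt_atTop 0)).mono fun t ht =>
      K.smul_mem ht.1 (inv_nonneg.2 ht.2.le)
  have hlim : Tendsto (fun t : ℝ => t⁻¹ • (v + t • w)) atTop (𝓝 w) := by
    have : Tendsto (fun t : ℝ => t⁻¹ • v + w) atTop (𝓝 w) := by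
      simpa using ((tendsto_inv_atTop_zero (𝕜 := ℝ)).smul_const v).add_const w
    refine this.congr' ((eventually_ne_atTop 0).mono fun t ht => ?_)
    simp only [smul_add, smul_smul, inv_mul_cancel₀ ht, one_smul]
  exact K.isClosed.mem_of_frequently_of_tendsto hmem hlim

lemma eq_zero_of_frequently_add_smul_mem_and_sub_smul_mem (hK : (K : ConvexCone ℝ E).Salient)
    (h : ∃ᶠ t : ℝ in atTop, v + t • w ∈ K ∧ v - t • w ∈ K) : w = 0 := by
  have hw : w ∈ K := K.mem_of_frequently_add_smul_mem (h.mono fun _ ht => ht.1)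
  have hnw : -w ∈ K := K.mem_of_frequently_add_smul_mem (v := v) <| h.mono fun t ht => by
    simpa [smul_neg, ← sub_eq_add_neg] using ht.2
  by_contra hw0
  exact hK w hw hw0 hnw

lemma le_of_hasEigenvector_of_mem_interior (hK : (K : ConvexCone ℝ E).Salient)
    (hTK : MapsTo T K K) (hv : T.HasEigenvector ρ v) (hvK : v ∈ interior K) (hρ : 0 < ρ)
    (hw : T.HasEigenvector ρ' w) : ρ' ≤ ρ := by
  by_contra! hlt
  obtain ⟨δ, hδ, hplus, hminus⟩ := exists_pos_add_smul_mem_and_sub_smul_mem hvK w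
  -- `ρ⁻ⁿ Tⁿ (v + s w) = v + (ρ'/ρ)ⁿ s w`
  have hiter : ∀ n : ℕ, ∀ s : ℝ, v + s • w ∈ K → v + ((ρ' / ρ) ^ n * s) • w ∈ K := by
    intro n s hs
    have hTn : (T ^ n) (v + s • w) ∈ K := by
      rw [Module.End.pow_apply]; exact (hTK.iterate n) hs
    rw [map_add, map_smul, hv.pow_apply, hw.pow_apply, smul_smul] at hTn
    convert K.smul_mem hTn (inv_nonneg.2 (pow_nonneg hρ.le n)) using 1
    rw [smul_add, smul_smul, smul_smul, inv_mul_cancel₀ (pow_ne_zero n hρ.ne'), one_smul, div_pow]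
    congr 2
    field_simp
  have hgrow : Tendsto (fun n : ℕ => (ρ' / ρ) ^ n * δ) atTop atTop :=
    (tendsto_pow_atTop_atTop_of_one_lt ((one_lt_div hρ).2 hlt)).atTop_mul_const hδ
  refine hw.2 (K.eq_zero_of_frequently_add_smul_mem_and_sub_smul_mem hK (v := v) ?_)
  refine hgrow.frequently (Frequently.of_forall fun n => ⟨hiter n δ hplus, ?_⟩)
  have := hiter n (-δ) (by rwa [neg_smul, ← sub_eq_add_neg])
  rwa [mul_neg, neg_smul, ← sub_eq_add_neg] at this

lemma mem_span_singleton_of_mem_eigenspace (hK : (K : ConvexCone ℝ E).Salient)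
    (hT : K.IsStrictlyPositive T) (hv : T.HasEigenvector ρ v)
    (hvK : v ∈ interior K) (hρ : 0 < ρ) (hw : w ∈ T.eigenspace ρ) : w ∈ ℝ ∙ v := by
  by_contra hwv
  have hline_ne : ∀ t : ℝ, v + t • w ≠ 0 := by
    intro t h
    rcases eq_or_ne t 0 with rfl | ht
    · exact hv.2 (by simpa using h)
    · refine hwv ((Submodule.smul_mem_iff _ ht).1 ?_)
      rw [eq_neg_of_add_eq_zero_right h]
      exact neg_mem (Submodule.mem_span_singleton_self v)
  -- every point of `K` on the line `v + ℝ w` is an eigenvector, hence interior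
  have hline_int : ∀ t : ℝ, v + t • w ∈ K → v + t • w ∈ interior K := by
    intro t ht
    have hTx : T (v + t • w) = ρ • (v + t • w) := by
      rw [map_add, map_smul, hv.apply_eq_smul, Module.End.mem_eigenspace_iff.1 hw, smul_add,
        smul_comm t ρ]
    have h := K.smul_mem_interior (hT _ ht (hline_ne t)) (inv_pos.2 hρ)
    rwa [hTx, smul_smul, inv_mul_cancel₀ hρ.ne', one_smul] at h
  have hcont : Continuous fun t : ℝ => v + t • w := by fun_prop
  have hclopen : IsClopen {t : ℝ | v + t • w ∈ K} := by
    refine ⟨K.isClosed.preimage hcont, ?_⟩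
    convert isOpen_interior.preimage hcont using 1
    exact Set.ext fun t => ⟨hline_int t, fun h => interior_subset (s := (K : Set E)) h⟩
  have hall : ∀ t : ℝ, v + t • w ∈ K :=
    eq_univ_iff_forall.1 (hclopen.eq_univ ⟨0, by simpa using interior_subset hvK⟩)
  refine hwv ((K.eq_zero_of_frequently_add_smul_mem_and_sub_smul_mem hK
    (Frequently.of_forall fun t => ⟨hall t, ?_⟩)) ▸ zero_mem _)
  simpa [sub_eq_add_neg] using hall (-t)

def collatzWielandtPairs (T : Module.End ℝ E) : Set (E × ℝ) :=
  {p | p.1 ∈ K ∧ ‖p.1‖ = 1 ∧ 0 ≤ p.2 ∧ T p.1 - p.2 • p.1 ∈ K}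

lemma nonempty_collatzWielandtPairs (hT : MapsTo T K K) (hne : ∃ x ∈ K, x ≠ 0) :
    (K.collatzWielandtPairs T).Nonempty := by
  obtain ⟨x, hx, hx0⟩ := hne
  have hx₁ : ‖x‖⁻¹ • x ∈ K := K.smul_mem hx (by positivity)
  exact ⟨(‖x‖⁻¹ • x, 0), hx₁, norm_smul_inv_norm hx0, le_rfl, by simpa using hT hx₁⟩

variable [FiniteDimensional ℝ E]

lemma exists_norm_le_mul_norm_add (hK : (K : ConvexCone ℝ E).Salient) :
    ∃ c : ℝ, 0 ≤ c ∧ ∀ a ∈ K, ∀ b ∈ K, ‖a‖ ≤ c * ‖a + b‖ := by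
  by_contra! h
  have hseq : ∀ n : ℕ, ∃ a ∈ K, ∃ b ∈ K, ‖a‖ = 1 ∧ ‖a + b‖ < 1 / (n + 1) := by
    intro n
    obtain ⟨a, ha, b, hb, hab⟩ := h (n + 1) (by positivity)
    have ha0 : 0 < ‖a‖ := (by positivity : (0 : ℝ) ≤ _).trans_lt hab
    refine ⟨‖a‖⁻¹ • a, K.smul_mem ha (by positivity), ‖a‖⁻¹ • b, K.smul_mem hb (by positivity),
      norm_smul_inv_norm (norm_pos_iff.1 ha0), ?_⟩
    rw [← smul_add, norm_smul, norm_inv, norm_norm, lt_div_iff₀ (by positivity)]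
    calc ‖a‖⁻¹ * ‖a + b‖ * (n + 1) = ‖a‖⁻¹ * ((n + 1) * ‖a + b‖) := by ring
      _ < ‖a‖⁻¹ * ‖a‖ := by gcongr
      _ = 1 := inv_mul_cancel₀ ha0.ne'
  choose a ha b hb ha1 hab using hseq
  obtain ⟨a₀, ⟨ha₀K, ha₀1⟩, φ, hφ, hlim⟩ :=
    ((isCompact_sphere (0 : E) 1).inter_left K.isClosed).tendsto_subseq
      (x := a) fun n => ⟨ha n, by simpa using ha1 n⟩
  have hsum : Tendsto (fun n => a n + b n) atTop (𝓝 0) :=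
    squeeze_zero_norm (fun n => (hab n).le) tendsto_one_div_add_atTop_nhds_zero_nat
  have hb₀ : Tendsto (fun n => b (φ n)) atTop (𝓝 (-a₀)) := by
    simpa using (hsum.comp hφ.tendsto_atTop).sub hlim
  have hna₀ : -a₀ ∈ K := K.isClosed.mem_of_tendsto hb₀ (Eventually.of_forall fun n => hb (φ n))
  exact hK a₀ ha₀K (ne_zero_of_mem_sphere (by norm_num) ⟨a₀, ha₀1⟩) hna₀

lemma isCompact_collatzWielandtPairs (hK : (K : ConvexCone ℝ E).Salient) (T : Module.End ℝ E) :
    IsCompact (K.collatzWielandtPairs T) := by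
  obtain ⟨c, hc0, hc⟩ := K.exists_norm_le_mul_norm_add hK
  let T' := LinearMap.toContinuousLinearMap T
  have hbound : ∀ x ∈ K, ‖x‖ = 1 → ∀ r : ℝ, 0 ≤ r → T x - r • x ∈ K → r ≤ c * ‖T'‖ := by
    intro x hx hx1 r hr hrx
    calc r = ‖r • x‖ := by rw [norm_smul, hx1, mul_one, Real.norm_of_nonneg hr]
      _ ≤ c * ‖r • x + (T x - r • x)‖ := hc _ (K.smul_mem hx hr) _ hrx
      _ = c * ‖T' x‖ := by simp [T']
      _ ≤ c * ‖T'‖ := by simpa [hx1] using mul_le_mul_of_nonneg_left (T'.le_opNorm x) hc0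
  refine ((isCompact_sphere (0 : E) 1).prod (isCompact_Icc (a := 0) (b := c * ‖T'‖)))
    |>.of_isClosed_subset ?_ ?_
  · have hT : Continuous T := T.continuous_of_finiteDimensional
    exact (K.isClosed.preimage continuous_fst).inter
      ((isClosed_eq (by fun_prop) continuous_const).inter
      ((isClosed_le continuous_const continuous_snd).inter (K.isClosed.preimage (by fun_prop))))
  · rintro ⟨x, r⟩ ⟨hx, hx1, hr, hrx⟩
    exact ⟨by simpa using hx1, hr, hbound x hx hx1 r hr hrx⟩

lemma exists_hasEigenvector_mem_interior (hK : (K : ConvexCone ℝ E).Salient)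
    (hT : K.IsStrictlyPositive T) (hne : ∃ x ∈ K, x ≠ 0) :
    ∃ ρ : ℝ, 0 < ρ ∧ ∃ v ∈ interior K, T.HasEigenvector ρ v := by
  obtain ⟨⟨x₀, ρ⟩, ⟨hx₀, hx₀1, hρ0, hρx₀⟩, hmax⟩ :=
    (K.isCompact_collatzWielandtPairs hK T).exists_isMaxOn
      (K.nonempty_collatzWielandtPairs hT.mapsTo hne) continuous_snd.continuousOn
  have hx₀0 : x₀ ≠ 0 := ne_zero_of_norm_ne_zero (by rw [hx₀1]; exact one_ne_zero)
  have : Nontrivial E := nontrivial_of_ne x₀ 0 hx₀0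
  -- a strict inequality `r x < T x` can be improved, so it fails at the maximum
  have hlt : ∀ x ∈ K, ∀ r : ℝ, 0 ≤ r → T x - r • x ∈ interior K → r < ρ := by
    intro x hx r hr hrx
    have hx0 : x ≠ 0 := by
      rintro rfl
      exact K.zero_notMem_interior hK (by simpa using hrx)
    obtain ⟨δ, hδ, -, hδx⟩ := exists_pos_add_smul_mem_and_sub_smul_mem hrx x
    have hmem : (‖x‖⁻¹ • x, r + δ) ∈ K.collatzWielandtPairs T := by
      refine ⟨K.smul_mem hx (by positivity), norm_smul_inv_norm hx0, by positivity, ?_⟩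
      convert K.smul_mem hδx (inv_nonneg.2 (norm_nonneg x)) using 1
      rw [map_smul]
      module
    have : r + δ ≤ ρ := hmax hmem
    linarith
  have hρ : 0 < ρ := hlt x₀ hx₀ 0 le_rfl (by simpa using hT x₀ hx₀ hx₀0)
  have hTx₀ : T x₀ = ρ • x₀ := by
    by_contra hne
    have hy := hT _ hρx₀ (sub_ne_zero.2 hne)
    rw [map_sub, map_smul] at hy
    exact lt_irrefl ρ (hlt _ (interior_subset (hT x₀ hx₀ hx₀0)) ρ hρ0 hy)
  refine ⟨ρ, hρ, x₀, ?_, Module.End.hasEigenvector_iff.2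
    ⟨Module.End.mem_eigenspace_iff.2 hTx₀, hx₀0⟩⟩
  have h := K.smul_mem_interior (hT x₀ hx₀ hx₀0) (inv_pos.2 hρ)
  rwa [hTx₀, smul_smul, inv_mul_cancel₀ hρ.ne', one_smul] at h

end ProperCone

end Cones

section Irreducible

variable {E : Type*} [NormedAddCommGroup E] [NormedSpace ℝ E] {ι : Type*}

def Module.End.IsIrreducibleFamily (𝒜 : ι → Module.End ℝ E) : Prop :=
  ∀ V : Submodule ℝ E, (∀ i, ∀ x ∈ V, 𝒜 i x ∈ V) → V = ⊥ ∨ V = ⊤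

def PointedCone.invariantEnds (K : PointedCone ℝ E) : PointedCone ℝ (Module.End ℝ E) where
  carrier := {B | MapsTo B K K}
  zero_mem' _ _ := zero_mem K
  add_mem' hA hB _ hx := add_mem (hA hx) (hB hx)
  smul_mem' t _ hB _ hx := K.smul_mem t.2 (hB hx)

lemma PointedCone.mul_mem_invariantEnds {K : PointedCone ℝ E} {A B : Module.End ℝ E}
    (hA : A ∈ K.invariantEnds) (hB : B ∈ K.invariantEnds) : A * B ∈ K.invariantEnds :=
  hA.comp hB

variable [FiniteDimensional ℝ E] {𝒜 : ι → Module.End ℝ E}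

lemma PointedCone.interior_nonempty_of_isIrreducibleFamily
    (hirr : Module.End.IsIrreducibleFamily 𝒜) (C : PointedCone ℝ E) (hC : ∀ i, MapsTo (𝒜 i) C C)
    (hne : ∃ x ∈ C, x ≠ 0) : (interior (C : Set E)).Nonempty := by
  obtain ⟨x, hx, hx0⟩ := hne
  have hspan : Submodule.span ℝ (C : Set E) = ⊤ := by
    refine (hirr _ fun i y hy => ?_).resolve_left fun hbot => hx0 ?_
    · have hle : Submodule.span ℝ (C : Set E) ≤ (Submodule.span ℝ (C : Set E)).comap (𝒜 i) :=
        Submodule.span_le.2 fun z hz => Submodule.subset_span (hC i hz)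
      exact hle hy
    · simpa [hbot] using Submodule.subset_span (R := ℝ) hx
  rw [C.convex.interior_nonempty_iff_affineSpan_eq_top,
    AffineSubspace.affineSpan_eq_top_iff_vectorSpan_eq_top_of_nonempty ℝ E E ⟨0, zero_mem C⟩,
    eq_top_iff, ← hspan, Submodule.span_le]
  intro y hy
  simpa using vsub_mem_vectorSpan ℝ hy (zero_mem C)

lemma exists_mem_apply_mem_interior (hirr : Module.End.IsIrreducibleFamily 𝒜)
    {S : PointedCone ℝ (Module.End ℝ E)} (hS1 : 1 ∈ S) (hS : ∀ i, ∀ B ∈ S, 𝒜 i * B ∈ S)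
    {K : Set E} (hSK : ∀ B ∈ S, MapsTo B K K) {x : E} (hx : x ∈ K) (hx0 : x ≠ 0) :
    ∃ B ∈ S, B x ∈ interior K := by
  let C : PointedCone ℝ E := S.map (LinearMap.applyₗ x)
  have hmemC : ∀ {y}, y ∈ C ↔ ∃ B ∈ S, B x = y := PointedCone.mem_map
  have hCK : (C : Set E) ⊆ K := fun y hy => by
    obtain ⟨B, hB, rfl⟩ := hmemC.1 hy
    exact hSK B hB hx
  have hCinv : ∀ i, MapsTo (𝒜 i) C C := fun i y hy => by
    obtain ⟨B, hB, rfl⟩ := hmemC.1 hy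
    exact hmemC.2 ⟨_, hS i B hB, rfl⟩
  obtain ⟨p, hp⟩ := C.interior_nonempty_of_isIrreducibleFamily hirr hCinv
    ⟨x, hmemC.2 ⟨1, hS1, rfl⟩, hx0⟩
  obtain ⟨B, hB, rfl⟩ := hmemC.1 (interior_subset hp)
  exact ⟨B, hB, interior_mono hCK hp⟩

namespace ProperCone

lemma exists_mem_isStrictlyPositive (hirr : Module.End.IsIrreducibleFamily 𝒜)
    {S : PointedCone ℝ (Module.End ℝ E)} (hS1 : 1 ∈ S) (hS : ∀ i, ∀ B ∈ S, 𝒜 i * B ∈ S)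
    (K : ProperCone ℝ E) (hSK : ∀ B ∈ S, MapsTo B K K) :
    ∃ A ∈ S, K.IsStrictlyPositive A := by
  classical
  have hchoice : ∀ y : ↥((K : Set E) ∩ Metric.sphere 0 1), ∃ B ∈ S, B y ∈ interior K :=
    fun y => exists_mem_apply_mem_interior hirr hS1 hS hSK y.2.1
      (ne_zero_of_mem_sphere one_ne_zero ⟨_, y.2.2⟩)
  choose B hBS hB using hchoice
  obtain ⟨t, ht⟩ := ((isCompact_sphere (0 : E) 1).inter_left K.isClosed).elim_finite_subcover
    (fun y => B y ⁻¹' interior K)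
    (fun y => isOpen_interior.preimage (B y).continuous_of_finiteDimensional)
    fun y hy => mem_iUnion.2 ⟨⟨y, hy⟩, hB _⟩
  refine ⟨∑ y ∈ t, B y, sum_mem fun y _ => hBS y, fun x hx hx0 => ?_⟩
  have hx₁ : ‖x‖⁻¹ • x ∈ (K : Set E) ∩ Metric.sphere 0 1 :=
    ⟨K.smul_mem hx (by positivity), mem_sphere_zero_iff_norm.2 (norm_smul_inv_norm hx0)⟩
  obtain ⟨y, hyt, hy⟩ := mem_iUnion₂.1 (ht hx₁)
  have hyx : B y x ∈ interior K := by
    have h := K.smul_mem_interior hy (norm_pos_iff.2 hx0)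
    rwa [map_smul, smul_smul, mul_inv_cancel₀ (norm_ne_zero_iff.2 hx0),
      one_smul] at h
  rw [← Finset.add_sum_erase t B hyt, LinearMap.add_apply]
  exact K.add_mem_interior hyx (hSK _ (sum_mem fun z _ => hBS z) hx)

lemma exists_isStrictlyPositive_and_isStrictlyPositive
    (hirr : Module.End.IsIrreducibleFamily 𝒜) (K₁ K₂ : ProperCone ℝ E)
    (hK₁ : ∀ i, MapsTo (𝒜 i) K₁ K₁) (hK₂ : ∀ i, MapsTo (𝒜 i) K₂ K₂) :
    ∃ T : Module.End ℝ E, K₁.IsStrictlyPositive T ∧ K₂.IsStrictlyPositive T := by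
  let S := (K₁ : PointedCone ℝ E).invariantEnds ⊓ (K₂ : PointedCone ℝ E).invariantEnds
  have hS1 : 1 ∈ S := ⟨mapsTo_id _, mapsTo_id _⟩
  have hS : ∀ i, ∀ B ∈ S, 𝒜 i * B ∈ S := fun i B hB =>
    ⟨PointedCone.mul_mem_invariantEnds (hK₁ i) hB.1,
      PointedCone.mul_mem_invariantEnds (hK₂ i) hB.2⟩
  obtain ⟨A₁, hA₁S, hA₁⟩ := K₁.exists_mem_isStrictlyPositive hirr hS1 hS fun B hB => hB.1
  obtain ⟨A₂, hA₂S, hA₂⟩ := K₂.exists_mem_isStrictlyPositive hirr hS1 hS fun B hB => hB.2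
  refine ⟨A₁ + A₂, hA₁.add_of_mapsTo hA₂S.1, ?_⟩
  rw [add_comm]
  exact hA₂.add_of_mapsTo hA₁S.2

lemma exists_ne_zero_mem_and_mem_or_neg_mem (hirr : Module.End.IsIrreducibleFamily 𝒜)
    (K₁ K₂ : ProperCone ℝ E) (h₁ : (K₁ : ConvexCone ℝ E).Salient)
    (h₂ : (K₂ : ConvexCone ℝ E).Salient) (hK₁ : ∀ i, MapsTo (𝒜 i) K₁ K₁)
    (hK₂ : ∀ i, MapsTo (𝒜 i) K₂ K₂) (hne₁ : ∃ x ∈ K₁, x ≠ 0) (hne₂ : ∃ x ∈ K₂, x ≠ 0) :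
    ∃ v ∈ K₁, v ≠ 0 ∧ (v ∈ K₂ ∨ -v ∈ K₂) := by
  obtain ⟨T, hT₁, hT₂⟩ :=
    exists_isStrictlyPositive_and_isStrictlyPositive hirr K₁ K₂ hK₁ hK₂
  obtain ⟨ρ, hρ, v, hvK, hv⟩ := K₁.exists_hasEigenvector_mem_interior h₁ hT₁ hne₁
  obtain ⟨ρ', hρ', w, hwK, hw⟩ := K₂.exists_hasEigenvector_mem_interior h₂ hT₂ hne₂
  obtain rfl : ρ' = ρ :=
    le_antisymm (K₁.le_of_hasEigenvector_of_mem_interior h₁ hT₁.mapsTo hv hvK hρ hw)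
      (K₂.le_of_hasEigenvector_of_mem_interior h₂ hT₂.mapsTo hw hwK hρ' hv)
  obtain ⟨c, rfl⟩ := Submodule.mem_span_singleton.1
    (K₁.mem_span_singleton_of_mem_eigenspace h₁ hT₁ hv hvK hρ hw.1)
  have hc : c ≠ 0 := by
    rintro rfl
    exact hw.2 (zero_smul ℝ v)
  refine ⟨v, interior_subset hvK, hv.2, ?_⟩
  rcases hc.lt_or_gt with hc | hc
  · right
    have h := K₂.smul_mem (interior_subset hwK) (inv_nonneg.2 (neg_nonneg.2 hc.le))
    rwa [smul_smul, inv_neg, neg_mul, inv_mul_cancel₀ hc.ne, neg_smul, one_smul] at h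
  · left
    have h := K₂.smul_mem (interior_subset hwK) (inv_nonneg.2 hc.le)
    rwa [smul_smul, inv_mul_cancel₀ hc.ne', one_smul] at h

end ProperCone

end Irreducible

section Matrices

variable {d m : ℕ} {𝒜 : Fin m → Matrix (Fin d) (Fin d) ℝ} {K K₁ K₂ : Set (Fin d → ℝ)}

lemma IsProperCone.zero_mem (hK : IsProperCone K) : (0 : Fin d → ℝ) ∈ K := by
  obtain ⟨e, he⟩ := hK.2.2.2.2
  simpa using hK.2.2.1 e (interior_subset he) 0 le_rfl

def IsProperCone.toProperCone (hK : IsProperCone K) : ProperCone ℝ (Fin d → ℝ) where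
  carrier := K
  add_mem' {x y} hx hy := by
    have h := hK.2.2.1 _ (hK.2.1 hx hy (by norm_num : (0 : ℝ) ≤ 1 / 2)
      (by norm_num : (0 : ℝ) ≤ 1 / 2) (by norm_num)) 2 (by norm_num)
    rwa [smul_add, smul_smul, smul_smul, mul_one_div_cancel two_ne_zero, one_smul,
      one_smul] at h
  zero_mem' := hK.zero_mem
  smul_mem' t x hx := hK.2.2.1 x hx t t.2
  isClosed' := hK.1

lemma IsProperCone.salient (hK : IsProperCone K) :
    (hK.toProperCone : ConvexCone ℝ (Fin d → ℝ)).Salient :=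
  (PointedCone.salient_iff_inter_neg_eq_singleton _).2 hK.2.2.2.1

lemma IsProperCone.exists_ne_zero [Nontrivial (Fin d → ℝ)] (hK : IsProperCone K) :
    ∃ x ∈ K, x ≠ 0 := by
  obtain ⟨e, he⟩ := hK.2.2.2.2
  exact (infinite_of_mem_nhds e (mem_interior_iff_mem_nhds.1 he)).nontrivial.exists_ne 0

lemma IsIrreducibleFamily.toLin' (h : IsIrreducibleFamily 𝒜) :
    Module.End.IsIrreducibleFamily fun i => Matrix.toLin' (𝒜 i) :=
  fun V hV => h V (by simpa using hV)

lemma IsInvariantCone.mapsTo_toLin' (h : IsInvariantCone 𝒜 K) (i : Fin m) :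
    MapsTo (Matrix.toLin' (𝒜 i)) K K :=
  fun x hx => by simpa using h.2 i x hx

lemma IsInvariantCone.neg (h : IsInvariantCone 𝒜 K) : IsInvariantCone 𝒜 (-K) := by
  obtain ⟨⟨hcl, hconv, hcone, hsal, e, he⟩, hinv⟩ := h
  refine ⟨⟨hcl.neg, hconv.neg, fun x hx t ht => ?_, by rwa [neg_neg, inter_comm], -e, ?_⟩,
    fun i x hx => ?_⟩
  · simpa using hcone _ hx t ht
  · exact ((Homeomorph.neg _).preimage_interior K).subset (by simpa using he)
  · simpa [Matrix.mulVec_neg] using hinv i _ hx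

lemma IsInvariantCone.inter (hirr : IsIrreducibleFamily 𝒜) (h₁ : IsInvariantCone 𝒜 K₁)
    (h₂ : IsInvariantCone 𝒜 K₂) (hne : K₁ ∩ K₂ ≠ {0}) : IsInvariantCone 𝒜 (K₁ ∩ K₂) := by
  let C : PointedCone ℝ (Fin d → ℝ) := (h₁.1.toProperCone : PointedCone ℝ _) ⊓ h₂.1.toProperCone
  have h0 : (0 : Fin d → ℝ) ∈ K₁ ∩ K₂ := ⟨h₁.1.zero_mem, h₂.1.zero_mem⟩
  refine ⟨⟨h₁.1.1.inter h₂.1.1, h₁.1.2.1.inter h₂.1.2.1,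
    fun x hx t ht => ⟨h₁.1.2.2.1 x hx.1 t ht, h₂.1.2.2.1 x hx.2 t ht⟩, ?_, ?_⟩,
    fun i x hx => ⟨h₁.2 i x hx.1, h₂.2 i x hx.2⟩⟩
  · refine subset_antisymm (fun x hx => ?_) (singleton_subset_iff.2 ⟨h0, by simpa using h0⟩)
    rw [← h₁.1.2.2.2.1]
    exact ⟨hx.1.1, hx.2.1⟩
  · exact C.interior_nonempty_of_isIrreducibleFamily hirr.toLin'
      (fun i x hx => ⟨h₁.mapsTo_toLin' i hx.1, h₂.mapsTo_toLin' i hx.2⟩)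
      (((nontrivial_iff_ne_singleton h0).2 hne).exists_ne 0)

lemma IsInvariantCone.inter_ne_zero_or_inter_neg_ne_zero [Nontrivial (Fin d → ℝ)]
    (hirr : IsIrreducibleFamily 𝒜) (h₁ : IsInvariantCone 𝒜 K₁) (h₂ : IsInvariantCone 𝒜 K₂) :
    K₁ ∩ K₂ ≠ {0} ∨ K₁ ∩ -K₂ ≠ {0} := by
  obtain ⟨v, hv₁, hv0, hv₂⟩ := ProperCone.exists_ne_zero_mem_and_mem_or_neg_mem hirr.toLin'
    h₁.1.toProperCone h₂.1.toProperCone h₁.1.salient h₂.1.salient h₁.mapsTo_toLin'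
    h₂.mapsTo_toLin' h₁.1.exists_ne_zero h₂.1.exists_ne_zero
  refine hv₂.imp (fun hv h => hv0 ?_) (fun hv h => hv0 ?_) <;>
    exact (h ▸ ⟨hv₁, hv⟩ : v ∈ ({0} : Set _))

lemma IsInvariantCone.inter_eq_zero_or_inter_neg_eq_zero (hirr : IsIrreducibleFamily 𝒜)
    (h₁ : IsInvariantCone 𝒜 K₁) (h₂ : IsInvariantCone 𝒜 K₂) :
    K₁ ∩ K₂ = {0} ∨ K₁ ∩ -K₂ = {0} := by
  by_contra! h
  have hpos := h₁.inter hirr h₂ h.1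
  have hneg := h₁.inter hirr h₂.neg h.2
  obtain ⟨x, hx, hx0⟩ := ((nontrivial_iff_ne_singleton hpos.1.zero_mem).2 h.1).exists_ne 0
  have : Nontrivial (Fin d → ℝ) := nontrivial_of_ne x 0 hx0
  -- a nonzero vector of `(K₁ ∩ K₂) ∩ ±(K₁ ∩ -K₂)` lies in `K₂ ∩ -K₂` or in `K₁ ∩ -K₁`
  rcases hpos.inter_ne_zero_or_inter_neg_ne_zero hirr hneg with h' | h'
  · refine h' (subset_antisymm (fun y hy => ?_) (singleton_subset_iff.2
      ⟨hpos.1.zero_mem, hneg.1.zero_mem⟩))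
    rw [← h₂.1.2.2.2.1]
    exact ⟨hy.1.2, hy.2.2⟩
  · refine h' (subset_antisymm (fun y hy => ?_) (singleton_subset_iff.2
      ⟨hpos.1.zero_mem, by simpa using hneg.1.zero_mem⟩))
    rw [← h₁.1.2.2.2.1]
    exact ⟨hy.1.1, hy.2.1⟩

end Matrices

theorem intersection_dichotomy_general {d m : ℕ}
    (𝒜 : Fin m → Matrix (Fin d) (Fin d) ℝ)
    (hirr : IsIrreducibleFamily 𝒜) (K₁ K₂ : Set (Fin d → ℝ))
    (hK₁ : IsInvariantCone 𝒜 K₁) (hK₂ : IsInvariantCone 𝒜 K₂) :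
    (IsProperCone (K₁ ∩ K₂) ∧ K₁ ∩ (-K₂) = {0}) ∨
    (IsProperCone (K₁ ∩ (-K₂)) ∧ K₁ ∩ K₂ = {0}) := by
  rcases subsingleton_or_nontrivial (Fin d → ℝ) with hd | hd
  · left
    rw [Subsingleton.eq_univ_of_nonempty ⟨0, hK₂.1.zero_mem⟩, inter_univ]
    exact ⟨hK₁.1, subsingleton_of_subsingleton.eq_singleton_of_mem ⟨hK₁.1.zero_mem, by simp⟩⟩
  rcases hK₁.inter_eq_zero_or_inter_neg_eq_zero hirr hK₂ with h | h
  · right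
    have hneg := (hK₁.inter_ne_zero_or_inter_neg_ne_zero hirr hK₂).resolve_left (not_not.2 h)
    exact ⟨(hK₁.inter hirr hK₂.neg hneg).1, h⟩
  · left
    have hpos := (hK₁.inter_ne_zero_or_inter_neg_ne_zero hirr hK₂).resolve_right (not_not.2 h)
    exact ⟨(hK₁.inter hirr hK₂ hpos).1, h⟩

/-- For two proper invariant cones `K₁, K₂` of an irreducible finite family,
exactly one of `K₁ ∩ K₂` and `K₁ ∩ (-K₂)` is a proper cone, the other is `{0}`. -/
theorem intersection_dichotomy {d m : ℕ} (hm : 0 < m)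
    (𝒜 : Fin m → Matrix (Fin d) (Fin d) ℝ)
    (hirr : IsIrreducibleFamily 𝒜) (K₁ K₂ : Set (Fin d → ℝ))
    (hK₁ : IsInvariantCone 𝒜 K₁) (hK₂ : IsInvariantCone 𝒜 K₂) :
    (IsProperCone (K₁ ∩ K₂) ∧ K₁ ∩ (-K₂) = {0}) ∨
    (IsProperCone (K₁ ∩ (-K₂)) ∧ K₁ ∩ K₂ = {0}) :=
  intersection_dichotomy_general 𝒜 hirr K₁ K₂ hK₁ hK₂
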